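/- arXiv:1704.04025 — 2 statements merged into one kernel-verified Lean document; each statement's English description precedes it below -/
import Mathlib

section
/- (Theorem 1 of the paper) For odd positive integers w₁, w₂, every n ≥ 0, every m ≥ 1, and parameters x, y: Σ_{j=0}^{n} C(n,j) w₂^j w₁^{n-j} 𝓔_{n-j}^{(m)}(w₂x | λ/w₁) Σ_{k=0}^{j} C(j,k) S̃_k(w₁-1 | λ/w₂) 𝓔_{j-k}^{(m-1)}(w₁y | λ/w₂) = Σ_{j=0}^{n} C(n,j) w₁^j w₂^{n-j} 𝓔_{n-j}^{(m)}(w₁x | λ/w₂) Σ_{k=0}^{j} C(j,k) S̃_k(w₂-1 | λ/w₁) 𝓔_{j-k}^{(m-1)}(w₂y | λ/w₁). -/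
/-!
Doubling the inner sum and expanding `S̃_k` turns it, via the addition formula
`𝓔_n^{(r)}(z + c|μ) = ∑_k C(n,k) (c|μ)_k 𝓔_{n-k}^{(r)}(z|μ)`, into the alternating sum
`2 ∑_{l<w₁} (-1)^l 𝓔_j^{(m-1)}(w₁y + l|λ/w₂)`, which the recursion telescopes (`w₁` odd) to
`𝓔_j^{(m)}(w₁y|λ/w₂) + 𝓔_j^{(m)}(w₁(y+1)|λ/w₂)`. So it suffices that
`∑_j C(n,j) w₂^j w₁^{n-j} 𝓔_{n-j}^{(m)}(w₂x|λ/w₁) 𝓔_j^{(m)}(w₁y|λ/w₂)` is symmetric in `w₁, w₂`.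

The addition formula at `z = 0` is an Appell expansion, and after rescaling it writes
`w^d 𝓔_d^{(m)}(z|λ/w)` as the binomial convolution of `(w^i 𝓔_i^{(m)}(0|λ/w))_i` with
`((wz|λ)_k)_k`. The sum above is then a binomial convolution of four sequences, two of which
depend on `w₁` and `w₂` only through `w₁w₂`; binomial convolution is commutative and associative,
being the product of exponential generating functions.
-/

open Polynomial Finset

noncomputable def dff {R : Type*} [CommRing R] (μ : R) (n : ℕ) : Polynomial R :=
  ∏ i ∈ Finset.range n, (Polynomial.X - Polynomial.C ((i : R) * μ))

/-- `S̃_k(N|μ) = ∑_{l=0}^N (-1)^l (l|μ)_k`. -/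
noncomputable def Stilde {R : Type*} [CommRing R] (μ : R) (k N : ℕ) : R :=
  ∑ l ∈ Finset.range (N + 1), (-1 : R) ^ l * (dff μ k).eval (l : R)

section BinomialConv

variable {A : Type*}

noncomputable def binomialConv [CommSemiring A] (a b : ℕ → A) (n : ℕ) : A :=
  ∑ k ∈ range (n + 1), (n.choose k : A) * a k * b (n - k)

section CommSemiring

variable [CommSemiring A]

theorem map_binomialConv {B G : Type*} [CommSemiring B] [FunLike G A B] [RingHomClass G A B]
    (f : G) (a b : ℕ → A) (n : ℕ) :
    f (binomialConv a b n) = binomialConv (fun k => f (a k)) (fun k => f (b k)) n := by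
  simp [binomialConv, map_sum]

theorem pow_mul_binomialConv (c : A) (a b : ℕ → A) (n : ℕ) :
    c ^ n * binomialConv a b n = binomialConv (fun k => c ^ k * a k) (fun k => c ^ k * b k) n := by
  rw [binomialConv, binomialConv, mul_sum]
  refine sum_congr rfl fun k hk => ?_
  rw [← Nat.add_sub_cancel' (Nat.lt_succ_iff.mp (mem_range.mp hk))]
  simp only [pow_add, Nat.add_sub_cancel_left]
  ring

theorem binomialConv_sum_mul_left {ι : Type*} (s : Finset ι) (g : ι → A) (a : ι → ℕ → A)
    (b : ℕ → A) (n : ℕ) :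
    binomialConv (fun k => ∑ l ∈ s, g l * a l k) b n = ∑ l ∈ s, g l * binomialConv (a l) b n := by
  simp only [binomialConv, mul_sum, sum_mul]
  rw [sum_comm]
  exact sum_congr rfl fun _ _ => sum_congr rfl fun _ _ => by ring

end CommSemiring

section Egf

variable [CommRing A] [Algebra ℚ A]

noncomputable def egf (a : ℕ → A) : PowerSeries A :=
  PowerSeries.mk fun n => (n.factorial : ℚ)⁻¹ • a n

theorem egf_injective : Function.Injective (egf (A := A)) := by
  intro a b h
  funext n
  have hn := congrArg (PowerSeries.coeff n) h
  simp only [egf, PowerSeries.coeff_mk] at hn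
  exact (smul_right_injective A (inv_ne_zero (Nat.cast_ne_zero.mpr n.factorial_ne_zero))) hn

theorem egf_binomialConv (a b : ℕ → A) : egf (binomialConv a b) = egf a * egf b := by
  ext n
  rw [PowerSeries.coeff_mul, Nat.sum_antidiagonal_eq_sum_range_succ
    (fun i j => PowerSeries.coeff i (egf a) * PowerSeries.coeff j (egf b)), egf, egf, egf,
    PowerSeries.coeff_mk, binomialConv, smul_sum]
  refine sum_congr rfl fun k hk => ?_
  have hk : k ≤ n := Nat.lt_succ_iff.mp (mem_range.mp hk)
  have hchoose : (k.factorial : ℚ)⁻¹ * ((n - k).factorial : ℚ)⁻¹ =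
      (n.factorial : ℚ)⁻¹ * n.choose k := by
    rw [Nat.cast_choose ℚ hk]
    field_simp
  rw [PowerSeries.coeff_mk, PowerSeries.coeff_mk, smul_mul_smul_comm, mul_assoc, hchoose,
    ← smul_smul, ← nsmul_eq_mul, Nat.cast_smul_eq_nsmul]

theorem binomialConv_binomialConv_comm (u v a b : ℕ → A) :
    binomialConv (binomialConv u a) (binomialConv v b) =
      binomialConv (binomialConv u b) (binomialConv v a) :=
  egf_injective <| by simp only [egf_binomialConv]; ring

end Egf

end BinomialConv

namespace Polynomial

section CommSemiring

variable {R : Type*} [CommSemiring R]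

theorem taylor_two_mul (c : R) (p : R[X]) : taylor c (2 * p) = 2 * taylor c p := by
  rw [two_mul, map_add, two_mul]

theorem taylor_binomialConv (c : R) (a b : ℕ → R[X]) (n : ℕ) :
    taylor c (binomialConv a b n) =
      binomialConv (fun k => taylor c (a k)) (fun k => taylor c (b k)) n :=
  map_binomialConv (taylorAlgHom c) a b n

theorem eval_binomialConv (x : R) (a b : ℕ → R[X]) (n : ℕ) :
    (binomialConv a b n).eval x = binomialConv (fun k => (a k).eval x) (fun k => (b k).eval x) n :=
  map_binomialConv (evalRingHom x) a b n

end CommSemiring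

theorem aeval_taylor {R A : Type*} [CommSemiring R] [CommSemiring A] [Algebra R A]
    (c : R) (p : R[X]) (z : A) : aeval z (taylor c p) = aeval (z + algebraMap R A c) p := by
  rw [taylor_apply, aeval_comp, map_add, aeval_X, aeval_C]

theorem taylor_add_self_injective {R : Type*} [CommRing R] [NoZeroDivisors R]
    [CharZero R] (c : R) : Function.Injective fun p : R[X] => taylor c p + p := by
  intro p q h
  rw [← sub_eq_zero]
  have hpq : taylor c (p - q) = -(p - q) := by
    rw [map_sub]; linear_combination (h : taylor c p + p = taylor c q + q)
  have hlead := congrArg (coeff · (p - q).natDegree) hpq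
  simp only [coeff_taylor_natDegree, coeff_neg, coeff_natDegree, eq_neg_iff_add_eq_zero,
    add_self_eq_zero, leadingCoeff_eq_zero] at hlead
  exact hlead

end Polynomial

section FallingFactorial

variable {R : Type*} [CommRing R]

theorem dff_succ (μ : R) (n : ℕ) : dff μ (n + 1) = dff μ n * (X - C ((n : R) * μ)) :=
  prod_range_succ _ n

theorem taylor_dff (μ c : R) (n : ℕ) :
    taylor c (dff μ n) = binomialConv (fun k => C ((dff μ k).eval c)) (dff μ) n := by
  induction n with
  | zero => simp [dff, binomialConv]
  | succ n ih =>
    simp only [binomialConv, mul_assoc] at ih ⊢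
    rw [sum_choose_succ_mul (fun i j => C ((dff μ i).eval c) * dff μ j), dff_succ, taylor_mul, ih,
      sum_mul, ← sum_add_distrib]
    refine sum_congr rfl fun k hk => ?_
    have hk : k ≤ n := Nat.lt_succ_iff.mp (mem_range.mp hk)
    rw [Nat.succ_sub hk, dff_succ, dff_succ, eval_mul]
    simp only [map_sub, taylor_X, taylor_C, eval_sub, eval_X, eval_C]
    simp only [Nat.cast_sub hk, C_sub, C_mul, map_natCast]
    ring

theorem algebraMap_pow_mul_aeval_dff_div {F A : Type*} [Field F] [CommRing A] [Algebra F A]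
    {w : F} (hw : w ≠ 0) (μ : F) (k : ℕ) (z : A) :
    algebraMap F A (w ^ k) * aeval z (dff (μ / w) k) = aeval (algebraMap F A w * z) (dff μ k) := by
  rw [dff, dff, map_prod, map_prod, map_pow, pow_eq_prod_const, ← prod_mul_distrib]
  refine prod_congr rfl fun i _ => ?_
  simp only [map_sub, aeval_X, aeval_C, mul_sub, ← map_mul]
  congr 2
  field_simp

end FallingFactorial

structure IsDegenerateEulerFamily {F : Type*} [CommRing F] (E : F → ℕ → ℕ → F[X]) : Prop where
  zero : ∀ μ n, E μ 0 n = dff μ n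
  succ : ∀ μ r n, (E μ (r + 1) n).comp (X + 1) + E μ (r + 1) n = 2 * E μ r n

namespace IsDegenerateEulerFamily

section CommRing

variable {F : Type*} [CommRing F] {E : F → ℕ → ℕ → F[X]}

theorem taylor_one_add_self (hE : IsDegenerateEulerFamily E) (μ : F) (r n : ℕ) :
    taylor 1 (E μ (r + 1) n) + E μ (r + 1) n = 2 * E μ r n := by
  rw [taylor_apply, C_1]
  exact hE.succ μ r n

theorem two_mul_sum_range_taylor (hE : IsDegenerateEulerFamily E) (μ : F) (r n N : ℕ) :
    2 * ∑ l ∈ range N, (-1) ^ l * taylor (l : F) (E μ r n) =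
      E μ (r + 1) n - (-1) ^ N * taylor (N : F) (E μ (r + 1) n) := by
  set g : ℕ → F[X] := fun l => (-1) ^ l * taylor (l : F) (E μ (r + 1) n)
  have hstep : ∀ l : ℕ, 2 * ((-1) ^ l * taylor (l : F) (E μ r n)) = -(g (l + 1) - g l) := by
    intro l
    rw [mul_left_comm, ← taylor_two_mul, ← hE.taylor_one_add_self, map_add, taylor_taylor]
    simp only [g, Nat.cast_succ, pow_succ]
    ring
  rw [mul_sum, sum_congr rfl fun l _ => hstep l, sum_neg_distrib, sum_range_sub]
  simp only [g, pow_zero, Nat.cast_zero, taylor_zero, one_mul]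
  ring

variable [IsDomain F] [CharZero F]

theorem taylor_eq_binomialConv (hE : IsDegenerateEulerFamily E) (μ c : F) (r n : ℕ) :
    taylor c (E μ r n) = binomialConv (fun k => C ((dff μ k).eval c)) (E μ r) n := by
  induction r generalizing n with
  | zero =>
    rw [show E μ 0 = dff μ from funext (hE.zero μ)]
    exact taylor_dff μ c n
  | succ r ih =>
    apply taylor_add_self_injective (1 : F)
    calc taylor 1 (taylor c (E μ (r + 1) n)) + taylor c (E μ (r + 1) n)
        = taylor c (taylor 1 (E μ (r + 1) n) + E μ (r + 1) n) := by
          rw [map_add, taylor_taylor, taylor_taylor, add_comm 1 c]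
      _ = binomialConv (fun k => C ((dff μ k).eval c)) (fun k => 2 * E μ r k) n := by
          rw [hE.taylor_one_add_self, taylor_two_mul, ih]
          simp only [binomialConv, mul_sum]
          exact sum_congr rfl fun _ _ => by ring
      _ = taylor 1 (binomialConv (fun k => C ((dff μ k).eval c)) (E μ (r + 1)) n) +
            binomialConv (fun k => C ((dff μ k).eval c)) (E μ (r + 1)) n := by
          rw [taylor_binomialConv]
          simp only [binomialConv, taylor_C, ← sum_add_distrib, ← hE.taylor_one_add_self]
          exact sum_congr rfl fun _ _ => by ring

theorem eq_binomialConv_dff (hE : IsDegenerateEulerFamily E) (μ : F) (r n : ℕ) :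
    E μ r n = binomialConv (dff μ) (fun k => C ((E μ r k).eval 0)) n := by
  refine Polynomial.funext fun c => ?_
  have h := congrArg (eval 0) (hE.taylor_eq_binomialConv μ c r n)
  rw [taylor_eval, zero_add, eval_binomialConv] at h
  rw [h, eval_binomialConv]
  simp only [eval_C]

theorem two_mul_binomialConv_Stilde (hE : IsDegenerateEulerFamily E) {w : ℕ} (hw : Odd w)
    (μ : F) (r n : ℕ) :
    2 * binomialConv (fun k => C (Stilde μ k (w - 1))) (E μ r) n =
      E μ (r + 1) n + taylor (w : F) (E μ (r + 1) n) := by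
  have hS : (fun k => C (Stilde μ k (w - 1))) =
      fun k => ∑ l ∈ range w, (-1) ^ l * C ((dff μ k).eval (l : F)) := by
    funext k
    simp only [Stilde, Nat.sub_add_cancel hw.pos, map_sum, map_mul, map_pow, map_neg, map_one]
  simp only [hS, binomialConv_sum_mul_left, ← hE.taylor_eq_binomialConv,
    hE.two_mul_sum_range_taylor, hw.neg_one_pow]
  ring

end CommRing

section Field

variable {F A : Type*} [Field F] [CharZero F] [CommRing A] [Algebra F A]
  {E : F → ℕ → ℕ → F[X]}

theorem algebraMap_pow_mul_aeval (hE : IsDegenerateEulerFamily E) {w : F} (hw : w ≠ 0)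
    (μ : F) (r n : ℕ) (z : A) :
    algebraMap F A (w ^ n) * aeval z (E (μ / w) r n) =
      binomialConv (fun k => aeval (algebraMap F A w * z) (dff μ k))
        (fun k => algebraMap F A (w ^ k * (E (μ / w) r k).eval 0)) n := by
  rw [hE.eq_binomialConv_dff, map_binomialConv, map_pow, pow_mul_binomialConv]
  simp only [← map_pow, algebraMap_pow_mul_aeval_dff_div hw, aeval_C, map_mul]

theorem sum_aeval_mul_aeval_comm (hE : IsDegenerateEulerFamily E) [Algebra ℚ A] {w₁ w₂ : F}
    (h₁ : w₁ ≠ 0) (h₂ : w₂ ≠ 0) (μ : F) (r n : ℕ) (x y : A) :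
    ∑ j ∈ range (n + 1), algebraMap F A (n.choose j * w₂ ^ j * w₁ ^ (n - j)) *
        aeval (algebraMap F A w₂ * x) (E (μ / w₁) r (n - j)) *
        aeval (algebraMap F A w₁ * y) (E (μ / w₂) r j) =
      ∑ j ∈ range (n + 1), algebraMap F A (n.choose j * w₁ ^ j * w₂ ^ (n - j)) *
        aeval (algebraMap F A w₁ * x) (E (μ / w₂) r (n - j)) *
        aeval (algebraMap F A w₂ * y) (E (μ / w₁) r j) := by
  have hconv : ∀ {a b : F}, a ≠ 0 → b ≠ 0 →
      ∑ j ∈ range (n + 1), algebraMap F A (n.choose j * b ^ j * a ^ (n - j)) *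
        aeval (algebraMap F A b * x) (E (μ / a) r (n - j)) *
        aeval (algebraMap F A a * y) (E (μ / b) r j) =
      binomialConv
        (binomialConv (fun k => aeval (algebraMap F A b * (algebraMap F A a * y)) (dff μ k))
          (fun k => algebraMap F A (b ^ k * (E (μ / b) r k).eval 0)))
        (binomialConv (fun k => aeval (algebraMap F A a * (algebraMap F A b * x)) (dff μ k))
          (fun k => algebraMap F A (a ^ k * (E (μ / a) r k).eval 0))) n := by
    intro a b ha hb
    rw [binomialConv]
    refine sum_congr rfl fun j _ => ?_
    rw [← hE.algebraMap_pow_mul_aeval hb, ← hE.algebraMap_pow_mul_aeval ha]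
    simp only [map_mul, map_natCast]
    ring
  rw [hconv h₁ h₂, hconv h₂ h₁]
  simp only [mul_left_comm (algebraMap F A w₁) (algebraMap F A w₂)]
  rw [binomialConv_binomialConv_comm]

theorem two_mul_sum_Stilde_mul_aeval (hE : IsDegenerateEulerFamily E) {a : ℕ} (ha : Odd a)
    (μ : F) {m : ℕ} (hm : 1 ≤ m) (j : ℕ) (y : A) :
    2 * ∑ k ∈ range (j + 1), algebraMap F A (j.choose k * Stilde μ k (a - 1)) *
        aeval (algebraMap F A a * y) (E μ (m - 1) (j - k)) =
      aeval (algebraMap F A a * y) (E μ m j) + aeval (algebraMap F A a * (y + 1)) (E μ m j) := by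
  have h := congrArg (aeval (algebraMap F A a * y)) (hE.two_mul_binomialConv_Stilde ha μ (m - 1) j)
  rw [Nat.sub_add_cancel hm, map_mul, map_binomialConv, map_add, aeval_taylor] at h
  simpa only [binomialConv, map_ofNat, aeval_C, map_mul, map_natCast, mul_add, mul_one,
    mul_assoc] using h

theorem two_mul_sum_Stilde (hE : IsDegenerateEulerFamily E) {a b : ℕ} (ha : Odd a) (μ : F)
    {m : ℕ} (hm : 1 ≤ m) (n : ℕ) (x y : A) :
    2 * ∑ j ∈ range (n + 1), algebraMap F A (n.choose j * (b : F) ^ j * (a : F) ^ (n - j)) *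
        aeval (algebraMap F A b * x) (E (μ / a) m (n - j)) *
        ∑ k ∈ range (j + 1), algebraMap F A (j.choose k * Stilde (μ / b) k (a - 1)) *
          aeval (algebraMap F A a * y) (E (μ / b) (m - 1) (j - k)) =
      ∑ j ∈ range (n + 1), algebraMap F A (n.choose j * (b : F) ^ j * (a : F) ^ (n - j)) *
          aeval (algebraMap F A b * x) (E (μ / a) m (n - j)) *
          aeval (algebraMap F A a * y) (E (μ / b) m j) +
        ∑ j ∈ range (n + 1), algebraMap F A (n.choose j * (b : F) ^ j * (a : F) ^ (n - j)) *
          aeval (algebraMap F A b * x) (E (μ / a) m (n - j)) *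
          aeval (algebraMap F A a * (y + 1)) (E (μ / b) m j) := by
  rw [mul_sum, ← sum_add_distrib]
  refine sum_congr rfl fun j _ => ?_
  rw [mul_left_comm, hE.two_mul_sum_Stilde_mul_aeval ha _ hm]
  ring

end Field

end IsDegenerateEulerFamily

/-- An identity in `ℚ(λ)[y][x]` (outer variable `x`, inner variable `y`), where `E μ r n` is
`𝓔_n^{(r)}(·|μ)`. -/
theorem stmt12 (E : RatFunc ℚ → ℕ → ℕ → Polynomial (RatFunc ℚ))
    (hE0 : ∀ μ n, E μ 0 n = dff μ n)
    (hErec : ∀ μ r n,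
      (E μ (r + 1) n).comp (Polynomial.X + 1) + E μ (r + 1) n = 2 * E μ r n)
    (w₁ w₂ : ℕ) (hw₁ : Odd w₁) (hw₂ : Odd w₂) (hw₁' : 0 < w₁) (hw₂' : 0 < w₂)
    (n m : ℕ) (hm : 1 ≤ m) :
    ∑ j ∈ Finset.range (n + 1),
        Polynomial.C (Polynomial.C ((n.choose j : RatFunc ℚ) * (w₂ : RatFunc ℚ) ^ j *
            (w₁ : RatFunc ℚ) ^ (n - j))) *
          Polynomial.aeval
            (Polynomial.C (Polynomial.C (w₂ : RatFunc ℚ)) *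
              (Polynomial.X : Polynomial (Polynomial (RatFunc ℚ))))
            (E (RatFunc.X / (w₁ : RatFunc ℚ)) m (n - j)) *
          ∑ k ∈ Finset.range (j + 1),
            Polynomial.C (Polynomial.C ((j.choose k : RatFunc ℚ) *
                Stilde (RatFunc.X / (w₂ : RatFunc ℚ)) k (w₁ - 1))) *
              Polynomial.aeval
                (Polynomial.C (Polynomial.C (w₁ : RatFunc ℚ) * Polynomial.X) :
                  Polynomial (Polynomial (RatFunc ℚ)))
                (E (RatFunc.X / (w₂ : RatFunc ℚ)) (m - 1) (j - k)) =
      ∑ j ∈ Finset.range (n + 1),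
        Polynomial.C (Polynomial.C ((n.choose j : RatFunc ℚ) * (w₁ : RatFunc ℚ) ^ j *
            (w₂ : RatFunc ℚ) ^ (n - j))) *
          Polynomial.aeval
            (Polynomial.C (Polynomial.C (w₁ : RatFunc ℚ)) *
              (Polynomial.X : Polynomial (Polynomial (RatFunc ℚ))))
            (E (RatFunc.X / (w₂ : RatFunc ℚ)) m (n - j)) *
          ∑ k ∈ Finset.range (j + 1),
            Polynomial.C (Polynomial.C ((j.choose k : RatFunc ℚ) *
                Stilde (RatFunc.X / (w₁ : RatFunc ℚ)) k (w₂ - 1))) *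
              Polynomial.aeval
                (Polynomial.C (Polynomial.C (w₂ : RatFunc ℚ) * Polynomial.X) :
                  Polynomial (Polynomial (RatFunc ℚ)))
                (E (RatFunc.X / (w₁ : RatFunc ℚ)) (m - 1) (j - k)) := by
  have hE : IsDegenerateEulerFamily E := ⟨hE0, hErec⟩
  have h₁ : (w₁ : RatFunc ℚ) ≠ 0 := Nat.cast_ne_zero.mpr hw₁'.ne'
  have h₂ : (w₂ : RatFunc ℚ) ≠ 0 := Nat.cast_ne_zero.mpr hw₂'.ne'
  have hC : ∀ c : RatFunc ℚ, (C (C c) : Polynomial (Polynomial (RatFunc ℚ))) =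
      algebraMap (RatFunc ℚ) _ c := fun _ => rfl
  have hCX : ∀ c : RatFunc ℚ, (C (C c * X) : Polynomial (Polynomial (RatFunc ℚ))) =
      algebraMap (RatFunc ℚ) _ c * C X := fun _ => C_mul
  simp only [hCX, hC]
  apply mul_left_cancel₀ (two_ne_zero : (2 : Polynomial (Polynomial (RatFunc ℚ))) ≠ 0)
  rw [hE.two_mul_sum_Stilde hw₁ _ hm, hE.two_mul_sum_Stilde hw₂ _ hm,
    hE.sum_aeval_mul_aeval_comm h₁ h₂, hE.sum_aeval_mul_aeval_comm h₁ h₂]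
end

section
/- (Classical specialization of Corollary 5) For odd positive integers w₁, w₂, all n ≥ 0: w₁^n Σ_{i=0}^{w₁-1} (-1)^i E_n(w₂x + (w₂/w₁)i) = w₂^n Σ_{i=0}^{w₂-1} (-1)^i E_n(w₁x + (w₁/w₂)i), where E_n is the classical Euler polynomial. -/
/-!
Let `Δ R = R(x + 1/w₁) + R(x)`. Shifting `x` by `1/w₁` moves the left-hand sum one index along,
so, `w₁` being odd, `Δ` telescopes it to `w₁^n (E_n(w₂x + w₂) + E_n(w₂x))`, which for odd `w₂`
telescopes again to `2 ∑_{k<w₂} (-1)^k (w₁w₂x + w₁k)^n`. On the right-hand side the same shift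
adds `1` to every argument, so `Δ` gives `2 w₂^n ∑_{j<w₂} (-1)^j (w₁x + w₁j/w₂)^n`, the same
polynomial. Finally `Δ` is injective in characteristic zero: `Δ R` has leading coefficient twice
that of `R`.
-/

open Polynomial Finset

theorem Finset.sum_range_neg_one_pow_mul_add_of_odd {R : Type*} [CommRing R] (f : ℕ → R) {m : ℕ}
    (hm : Odd m) : ∑ k ∈ range m, (-1) ^ k * (f (k + 1) + f k) = f m + f 0 := by
  calc ∑ k ∈ range m, (-1) ^ k * (f (k + 1) + f k)
      = -∑ k ∈ range m, ((-1) ^ (k + 1) * f (k + 1) - (-1) ^ k * f k) := by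
        rw [← sum_neg_distrib]
        exact sum_congr rfl fun k _ => by ring
    _ = f m + f 0 := by rw [sum_range_sub (fun k => (-1) ^ k * f k), hm.neg_one_pow]; ring

namespace Polynomial

theorem comp_X_add_C_add_self_injective {R : Type*} [CommRing R] [NoZeroDivisors R]
    [CharZero R] (c : R) : Function.Injective fun p : R[X] => p.comp (X + C c) + p := by
  intro p q hpq
  rw [← sub_eq_zero]
  set r := p - q
  have hr : taylor c r + r = 0 := by
    simp only [taylor_apply, r, sub_comp]
    linear_combination hpq
  have hlead : r.leadingCoeff + r.leadingCoeff = 0 := by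
    simpa only [coeff_add, coeff_taylor_natDegree, coeff_zero, coeff_natDegree]
      using congrArg (coeff · r.natDegree) hr
  rwa [add_self_eq_zero, leadingCoeff_eq_zero] at hlead

theorem comp_add_one_add_comp {R : Type*} [CommSemiring R] {p : R[X]} {n : ℕ}
    (hp : p.comp (X + 1) + p = 2 * X ^ n) (s : R[X]) :
    p.comp (s + 1) + p.comp s = 2 * s ^ n := by
  simpa only [add_comp, comp_assoc, X_comp, one_comp, mul_comp, ofNat_comp, X_pow_comp,
    Nat.cast_ofNat] using congrArg (·.comp s) hp

theorem comp_add_C_add_comp_of_odd {R : Type*} [CommRing R] {p : R[X]} {n : ℕ}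
    (hp : p.comp (X + 1) + p = 2 * X ^ n) (s : R[X]) {m : ℕ} (hm : Odd m) :
    p.comp (s + C (m : R)) + p.comp s = 2 * ∑ k ∈ range m, (-1) ^ k * (s + C (k : R)) ^ n := by
  have h := sum_range_neg_one_pow_mul_add_of_odd (fun k => p.comp (s + C (k : R))) hm
  simp only [Nat.cast_add, Nat.cast_one, C_add, C_1, ← add_assoc, comp_add_one_add_comp hp,
    Nat.cast_zero, C_0, add_zero] at h
  rw [← h, mul_sum]
  exact sum_congr rfl fun k _ => by ring

section AlternatingEulerSum

variable {K : Type*} [Field K] [CharZero K] {p : K[X]} {n : ℕ}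

noncomputable def alternatingEulerSum (p : K[X]) (n a b : ℕ) : K[X] :=
  C ((a : K) ^ n) *
    ∑ i ∈ range a, C ((-1 : K) ^ i) * p.comp (C (b : K) * X + C ((b : K) / (a : K) * (i : K)))

theorem alternatingEulerSum_comp_add_self (hp : p.comp (X + 1) + p = 2 * X ^ n) {a b : ℕ}
    (ha : Odd a) (hb : Odd b) :
    (alternatingEulerSum p n a b).comp (X + C (a : K)⁻¹) + alternatingEulerSum p n a b =
      2 * ∑ k ∈ range b, (-1) ^ k * (C ((a : K) * b) * X + C ((a : K) * k)) ^ n := by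
  have ha0 : (a : K) ≠ 0 := Nat.cast_ne_zero.mpr ha.pos.ne'
  let f (i : ℕ) : K[X] := p.comp (C (b : K) * X + C ((b : K) / (a : K) * (i : K)))
  have hshift (i : ℕ) : (f i).comp (X + C (a : K)⁻¹) = f (i + 1) := by
    simp only [f, comp_assoc, add_comp, mul_comp, C_comp, X_comp, mul_add, ← C_mul, add_assoc,
      ← C_add]
    congr 4
    field_simp
    push_cast
    ring
  calc (alternatingEulerSum p n a b).comp (X + C (a : K)⁻¹) + alternatingEulerSum p n a b
      = C ((a : K) ^ n) * ∑ i ∈ range a, (-1) ^ i * (f (i + 1) + f i) := by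
        rw [alternatingEulerSum, mul_comp, C_comp, sum_comp, ← mul_add, ← sum_add_distrib]
        refine congrArg _ (sum_congr rfl fun i _ => ?_)
        rw [mul_comp, C_comp, hshift, map_pow, map_neg, map_one, mul_add]
    _ = C ((a : K) ^ n) * (p.comp (C (b : K) * X + C (b : K)) + p.comp (C (b : K) * X)) := by
        rw [sum_range_neg_one_pow_mul_add_of_odd f ha]
        simp only [f, div_mul_cancel₀ _ ha0, Nat.cast_zero, mul_zero, C_0, add_zero]
    _ = _ := by
        rw [comp_add_C_add_comp_of_odd hp _ hb, mul_sum, mul_sum, mul_sum]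
        refine sum_congr rfl fun k _ => ?_
        rw [C_mul, C_mul, mul_assoc, ← mul_add, mul_pow, C_pow]
        ring

theorem alternatingEulerSum_swap_comp_add_self (hp : p.comp (X + 1) + p = 2 * X ^ n) {a : ℕ}
    (ha : a ≠ 0) (b : ℕ) :
    (alternatingEulerSum p n b a).comp (X + C (a : K)⁻¹) + alternatingEulerSum p n b a =
      2 * ∑ k ∈ range b, (-1) ^ k * (C ((a : K) * b) * X + C ((a : K) * k)) ^ n := by
  let v (j : ℕ) : K[X] := C (a : K) * X + C ((a : K) / (b : K) * (j : K))
  have hshift (j : ℕ) : (v j).comp (X + C (a : K)⁻¹) = v j + 1 := by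
    simp only [v, add_comp, mul_comp, C_comp, X_comp, mul_add, ← C_mul,
      mul_inv_cancel₀ (Nat.cast_ne_zero.mpr ha : (a : K) ≠ 0), C_1]
    ring
  calc (alternatingEulerSum p n b a).comp (X + C (a : K)⁻¹) + alternatingEulerSum p n b a
      = C ((b : K) ^ n) * ∑ j ∈ range b, (-1) ^ j * (2 * v j ^ n) := by
        rw [alternatingEulerSum, mul_comp, C_comp, sum_comp, ← mul_add, ← sum_add_distrib]
        refine congrArg _ (sum_congr rfl fun j _ => ?_)
        rw [mul_comp, C_comp, comp_assoc, hshift, map_pow, map_neg, map_one, ← mul_add,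
          comp_add_one_add_comp hp]
    _ = _ := by
        rw [mul_sum, mul_sum]
        refine sum_congr rfl fun j hj => ?_
        have hb : (b : K) ≠ 0 := Nat.cast_ne_zero.mpr (ne_zero_of_lt (mem_range.mp hj))
        have hv : C (b : K) * v j = C ((a : K) * b) * X + C ((a : K) * j) := by
          simp only [v, mul_add, ← mul_assoc, ← C_mul]
          congr 3 <;> field_simp
        rw [← hv, mul_pow, ← C_pow]
        ring

end AlternatingEulerSum

end Polynomial

theorem stmt15_general (E : ℕ → Polynomial ℚ)
    (hE : ∀ n, (E n).comp (Polynomial.X + 1) + E n = 2 * Polynomial.X ^ n)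
    (w₁ w₂ : ℕ) (hw₁ : Odd w₁) (hw₂ : Odd w₂)
    (n : ℕ) :
    Polynomial.C ((w₁ : ℚ) ^ n) *
        ∑ i ∈ Finset.range w₁, Polynomial.C ((-1 : ℚ) ^ i) *
          (E n).comp (Polynomial.C (w₂ : ℚ) * Polynomial.X +
            Polynomial.C ((w₂ : ℚ) / (w₁ : ℚ) * (i : ℚ))) =
      Polynomial.C ((w₂ : ℚ) ^ n) *
        ∑ i ∈ Finset.range w₂, Polynomial.C ((-1 : ℚ) ^ i) *
          (E n).comp (Polynomial.C (w₁ : ℚ) * Polynomial.X +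
            Polynomial.C ((w₁ : ℚ) / (w₂ : ℚ) * (i : ℚ))) :=
  comp_X_add_C_add_self_injective ((w₁ : ℚ)⁻¹)
    ((alternatingEulerSum_comp_add_self (hE n) hw₁ hw₂).trans
      (alternatingEulerSum_swap_comp_add_self (hE n) hw₁.pos.ne' w₂).symm)

/-- Classical specialization of Corollary 5: for odd `w₁ w₂`,
`w₁^n ∑_{i<w₁} (-1)^i E_n(w₂x + (w₂/w₁)i) = w₂^n ∑_{i<w₂} (-1)^i E_n(w₁x + (w₁/w₂)i)`,
where `E_n` is the classical Euler polynomial. -/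
theorem stmt15 (E : ℕ → Polynomial ℚ)
    (hE : ∀ n, (E n).comp (Polynomial.X + 1) + E n = 2 * Polynomial.X ^ n)
    (w₁ w₂ : ℕ) (hw₁ : Odd w₁) (hw₂ : Odd w₂) (hw₁' : 0 < w₁) (hw₂' : 0 < w₂)
    (n : ℕ) :
    Polynomial.C ((w₁ : ℚ) ^ n) *
        ∑ i ∈ Finset.range w₁, Polynomial.C ((-1 : ℚ) ^ i) *
          (E n).comp (Polynomial.C (w₂ : ℚ) * Polynomial.X +
            Polynomial.C ((w₂ : ℚ) / (w₁ : ℚ) * (i : ℚ))) =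
      Polynomial.C ((w₂ : ℚ) ^ n) *
        ∑ i ∈ Finset.range w₂, Polynomial.C ((-1 : ℚ) ^ i) *
          (E n).comp (Polynomial.C (w₁ : ℚ) * Polynomial.X +
            Polynomial.C ((w₁ : ℚ) / (w₂ : ℚ) * (i : ℚ))) :=
  stmt15_general E hE w₁ w₂ hw₁ hw₂ n
end
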